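/- For every admissible fibring pair (λ,μ) between the matrix of Belnap–Dunn logic FDE and the matrix of D'Ottaviano–da Costa logic J3, the formula ¬φ ∨ φ (with ¬ the J3 negation and ∨ the FDE disjunction) is valid in the fibred matrix (M_FDE ⊛ M_J3)_(λ,μ). -/

import Mathlib

set_option autoImplicit false

namespace Fibring

/-- Propositional formulas over a signature `C` with arity function `ar`. -/
inductive Fm (C : Type) (ar : C → ℕ) : Type
  | var : ℕ → Fm C ar
  | app : (c : C) → (Fin (ar c) → Fm C ar) → Fm C ar

/-- Homomorphic extension of a valuation `v` to all formulas, relative to an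
interpretation `I` of the connectives. -/
def eval {C A : Type} {ar : C → ℕ}
    (I : (c : C) → (Fin (ar c) → A) → A) (v : ℕ → A) : Fm C ar → A
  | .var n => v n
  | .app c args => I c fun i => eval I v (args i)

/-- Matrix consequence relation. -/
def Mdl {C A : Type} {ar : C → ℕ}
    (I : (c : C) → (Fin (ar c) → A) → A) (D : Set A)
    (Γ : Set (Fm C ar)) (φ : Fm C ar) : Prop :=
  ∀ v : ℕ → A, (∀ ψ ∈ Γ, eval I v ψ ∈ D) → eval I v φ ∈ D

/-- Substitution. -/
def subst {C : Type} {ar : C → ℕ} (σ : ℕ → Fm C ar) : Fm C ar → Fm C ar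
  | .var n => σ n
  | .app c args => .app c fun i => subst σ (args i)

variable {C₁ C₂ A₁ A₂ : Type} {ar₁ : C₁ → ℕ} {ar₂ : C₂ → ℕ}

/-- The coercion `∗_μ : A₁ ⊎ A₂ → A₁`. -/
def starMu (mu : A₂ → A₁) : A₁ ⊕ A₂ → A₁ := Sum.elim id mu

/-- The coercion `∗_λ : A₁ ⊎ A₂ → A₂`. -/
def starLa (lam : A₁ → A₂) : A₁ ⊕ A₂ → A₂ := Sum.elim lam id

/-- Interpretation of the fibred matrix `M_(λ,μ)`. -/
def fibInterp (I₁ : (c : C₁) → (Fin (ar₁ c) → A₁) → A₁)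
    (I₂ : (c : C₂) → (Fin (ar₂ c) → A₂) → A₂)
    (lam : A₁ → A₂) (mu : A₂ → A₁) :
    (c : C₁ ⊕ C₂) → (Fin (Sum.elim ar₁ ar₂ c) → A₁ ⊕ A₂) → A₁ ⊕ A₂
  | .inl c, args => Sum.inl (I₁ c fun i => starMu mu (args i))
  | .inr c, args => Sum.inr (I₂ c fun i => starLa lam (args i))

/-- Designated values of the fibred matrix: `D₁ ⊎ D₂`. -/
def Dfib (D₁ : Set A₁) (D₂ : Set A₂) : Set (A₁ ⊕ A₂) :=
  Sum.inl '' D₁ ∪ Sum.inr '' D₂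

/-- Admissible fibring pairs: `λ` and `μ` preserve and reflect designatedness. -/
def Admissible (D₁ : Set A₁) (D₂ : Set A₂) (lam : A₁ → A₂) (mu : A₂ → A₁) : Prop :=
  (∀ x, lam x ∈ D₂ ↔ x ∈ D₁) ∧ (∀ y, mu y ∈ D₁ ↔ y ∈ D₂)

/-- Recursive extension of a simple fibred valuation to the fibred language. -/
def sfvExt (I₁ : (c : C₁) → (Fin (ar₁ c) → A₁) → A₁)
    (I₂ : (c : C₂) → (Fin (ar₂ c) → A₂) → A₂)
    (lam : A₁ → A₂) (mu : A₂ → A₁) (v : ℕ → A₁ ⊕ A₂) :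
    Fm (C₁ ⊕ C₂) (Sum.elim ar₁ ar₂) → A₁ ⊕ A₂
  | .var n => v n
  | .app (.inl c) args =>
      Sum.inl (I₁ c fun i => starMu mu (sfvExt I₁ I₂ lam mu v (args i)))
  | .app (.inr c) args =>
      Sum.inr (I₂ c fun i => starLa lam (sfvExt I₁ I₂ lam mu v (args i)))

/-- Inclusion of `L(C₁)` into the fibred language `L(C₁ ⊎ C₂)`. -/
def inj₁ (ar₂ : C₂ → ℕ) : Fm C₁ ar₁ → Fm (C₁ ⊕ C₂) (Sum.elim ar₁ ar₂)
  | .var n => .var n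
  | .app c args => .app (Sum.inl c) fun i => inj₁ ar₂ (args i)

/-- `Repl c₁ c₂ h φ ψ`: `ψ` results from `φ` by replacing exactly one occurrence
of `c₁` by `c₂`. -/
inductive Repl {C : Type} {ar : C → ℕ} (c₁ c₂ : C) (h : ar c₁ = ar c₂) :
    Fm C ar → Fm C ar → Prop
  | top (args : Fin (ar c₁) → Fm C ar) :
      Repl c₁ c₂ h (.app c₁ args) (.app c₂ fun i => args (Fin.cast h.symm i))
  | congr (c : C) (args args' : Fin (ar c) → Fm C ar) (j : Fin (ar c))
      (hj : Repl c₁ c₂ h (args j) (args' j))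
      (hother : ∀ i, i ≠ j → args i = args' i) :
      Repl c₁ c₂ h (.app c args) (.app c args')

/-- `(c₁,c₂)`-associated formulas: a finite chain of single replacements of
`c₁` by `c₂` or vice versa (including equality). -/
def Assoc {C : Type} {ar : C → ℕ} (c₁ c₂ : C) (h : ar c₁ = ar c₂)
    (φ₁ φ₂ : Fm C ar) : Prop :=
  Relation.EqvGen (Repl c₁ c₂ h) φ₁ φ₂


/-! Concrete matrices: Belnap–Dunn's `FDE` and D'Ottaviano–da Costa's `J3`. -/

/-- The four truth-values of `FDE`. -/
inductive FDE : Type | t | b | n | f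
deriving DecidableEq

/-- FDE negation. -/
def fdeNeg : FDE → FDE
  | .t => .f | .b => .b | .n => .n | .f => .t

/-- FDE conjunction (lattice meet). -/
def fdeAnd : FDE → FDE → FDE
  | .t, x => x | .f, _ => .f
  | .b, .t => .b | .b, .b => .b | .b, .n => .f | .b, .f => .f
  | .n, .t => .n | .n, .b => .f | .n, .n => .n | .n, .f => .f

/-- FDE disjunction (lattice join). -/
def fdeOr : FDE → FDE → FDE
  | .t, _ => .t | .f, x => x
  | .b, .t => .t | .b, .b => .b | .b, .n => .t | .b, .f => .b
  | .n, .t => .t | .n, .b => .t | .n, .n => .n | .n, .f => .n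

/-- The signature of `FDE`: `∼`, `∧`, `∨`. -/
inductive CFDE : Type | neg | conj | disj
deriving DecidableEq

def arFDE : CFDE → ℕ
  | .neg => 1 | .conj => 2 | .disj => 2

/-- Interpretation of the `FDE` connectives. -/
def IFDE : (c : CFDE) → (Fin (arFDE c) → FDE) → FDE
  | .neg, a => fdeNeg (a (0 : Fin 1))
  | .conj, a => fdeAnd (a (0 : Fin 2)) (a (1 : Fin 2))
  | .disj, a => fdeOr (a (0 : Fin 2)) (a (1 : Fin 2))

/-- Designated values of `FDE`: `{t, b}`. -/
def DF : Set FDE := {.t, .b}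

/-- The three truth-values of `J3`: `0`, `1/2`, `1`. -/
inductive J3v : Type | zero | half | one
deriving DecidableEq

/-- J3 negation: `¬1 = 0`, `¬(1/2) = 1/2`, `¬0 = 1`. -/
def j3Neg : J3v → J3v
  | .one => .zero | .half => .half | .zero => .one

/-- J3 possibility operator `∇`. -/
def j3Nabla : J3v → J3v
  | .zero => .zero | .half => .one | .one => .one

/-- J3 disjunction `⊻` (maximum w.r.t. `0 < 1/2 < 1`). -/
def j3Or : J3v → J3v → J3v
  | .one, _ => .one | .zero, x => x
  | .half, .one => .one | .half, .half => .half | .half, .zero => .half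

/-- The signature of `J3`: `¬`, `⊻`, `∇`. -/
inductive CJ3 : Type | neg | disj | nabla
deriving DecidableEq

def arJ3 : CJ3 → ℕ
  | .neg => 1 | .disj => 2 | .nabla => 1

/-- Interpretation of the `J3` connectives. -/
def IJ3 : (c : CJ3) → (Fin (arJ3 c) → J3v) → J3v
  | .neg, a => j3Neg (a (0 : Fin 1))
  | .disj, a => j3Or (a (0 : Fin 2)) (a (1 : Fin 2))
  | .nabla, a => j3Nabla (a (0 : Fin 1))

/-- Designated values of `J3`: `{1, 1/2}`. -/
def DJ : Set J3v := {.one, .half}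

/-! Under an admissible pair, a value of the fibred matrix is designated exactly when its
coercions `∗_μ` and `∗_λ` are; so if
`φ` takes a designated value the right disjunct `φ` is designated, and otherwise the coercion of
that value into `J3` is undesignated, whence its `J3` negation, and the coercion of that back
into `FDE`, are designated. -/

section Coercions

variable {A₁ A₂ : Type} {D₁ : Set A₁} {D₂ : Set A₂}

@[simp]
lemma inl_mem_Dfib {x : A₁} : (Sum.inl x : A₁ ⊕ A₂) ∈ Dfib D₁ D₂ ↔ x ∈ D₁ := by
  simp [Dfib]

@[simp]
lemma inr_mem_Dfib {y : A₂} : (Sum.inr y : A₁ ⊕ A₂) ∈ Dfib D₁ D₂ ↔ y ∈ D₂ := by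
  simp [Dfib]

lemma starMu_mem_iff {mu : A₂ → A₁} (hmu : ∀ y, mu y ∈ D₁ ↔ y ∈ D₂) (x : A₁ ⊕ A₂) :
    starMu mu x ∈ D₁ ↔ x ∈ Dfib D₁ D₂ := by
  cases x <;> simp [starMu, hmu]

lemma starLa_mem_iff {lam : A₁ → A₂} (hlam : ∀ x, lam x ∈ D₂ ↔ x ∈ D₁) (x : A₁ ⊕ A₂) :
    starLa lam x ∈ D₂ ↔ x ∈ Dfib D₁ D₂ := by
  cases x <;> simp [starLa, hlam]

end Coercions

lemma fdeOr_mem_DF_iff (x y : FDE) : fdeOr x y ∈ DF ↔ x ∈ DF ∨ y ∈ DF := by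
  cases x <;> cases y <;> simp [fdeOr, DF]

lemma j3Neg_mem_DJ_of_notMem {z : J3v} (hz : z ∉ DJ) : j3Neg z ∈ DJ := by
  cases z <;> simp_all [j3Neg, DJ]

/-- for every admissible fibring pair between `FDE` and `J3`, the
hybrid formula `¬φ ∨ φ` (`¬` from `J3`, `∨` from `FDE`) is valid in the fibred
matrix. -/
theorem lem_hybrid_valid
    (lam : FDE → J3v) (mu : J3v → FDE)
    (hadm : Admissible DF DJ lam mu)
    (φ : Fm (CFDE ⊕ CJ3) (Sum.elim arFDE arJ3))
    (v : ℕ → FDE ⊕ J3v) :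
    eval (fibInterp IFDE IJ3 lam mu) v
        (.app (Sum.inl CFDE.disj) fun i =>
          if i.val = 0 then .app (Sum.inr CJ3.neg) (fun _ => φ) else φ) ∈
      Dfib DF DJ := by
  obtain ⟨hlam, hmu⟩ := hadm
  set a := eval (fibInterp IFDE IJ3 lam mu) v φ
  change Sum.inl (fdeOr (mu (j3Neg (starLa lam a))) (starMu mu a)) ∈ Dfib DF DJ
  rw [inl_mem_Dfib, fdeOr_mem_DF_iff, hmu, starMu_mem_iff hmu]
  by_cases ha : a ∈ Dfib DF DJ
  · exact Or.inr ha
  · exact Or.inl (j3Neg_mem_DJ_of_notMem (mt (starLa_mem_iff hlam a).1 ha))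

end Fibring
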